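/- Let B and k be positive integers and let G = (V, E) be a finite simple graph on n vertices with maximum degree at most B. Let G′ = (V′, E′) be the graph constructed from G as follows: for every vertex v ∈ V take a choice gadget that is a complete bipartite graph K_{B+1,B+2} (with a smaller side of B+1 vertices and a larger side of B+2 vertices); for every vertex v ∈ V take a domination gadget consisting of a vertex v_d together with B − d(v) + 1 pendant leaves attached to v_d, where d(v) is the degree of v in G; and for every vertex v ∈ V and every u in the closed neighborhood N[v] of v in G, add one edge from a distinct vertex of the larger side of v's choice gadget to the vertex u_d. Assign capacities: every vertex of G′ has capacity equal to its degree in G′, except each vertex v_d, which has capacity B+1. If G′ has a capacitated vertex cover of size at most n(B+2) + k, then G has a dominating set of size at most k. -/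

import Mathlib

/-- The vertex set of the gadget graph `G′` built from a graph on `V` with degree
function `d` and parameter `B`:
* `Sum.inl (v, Sum.inl i)` — the `i`-th vertex of the smaller side (size `B+1`) of the
  choice gadget of `v`;
* `Sum.inl (v, Sum.inr j)` — the `j`-th vertex of the larger side (size `B+2`) of the
  choice gadget of `v`;
* `Sum.inr (Sum.inl v)` — the vertex `v_d` of the domination gadget of `v`;
* `Sum.inr (Sum.inr ⟨v, l⟩)` — the `l`-th of the `B − d(v) + 1` pendant leaves attached
  to `v_d`. -/
abbrev GadgetVert (V : Type*) (B : ℕ) (d : V → ℕ) : Type _ :=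
  (V × (Fin (B + 1) ⊕ Fin (B + 2))) ⊕ (V ⊕ (Σ v : V, Fin (B - d v + 1)))

/-- The generating relation of the gadget graph: each choice gadget is a complete bipartite
graph `K_{B+1,B+2}`; for every `v` and every `u` in the closed neighborhood of `v`, the
vertex `ι v u` of the larger side of `v`'s choice gadget is joined to `u_d`; each leaf
`⟨v, l⟩` is joined to `v_d`. -/
def gadgetRel {V : Type*} (G : SimpleGraph V) (B : ℕ) (d : V → ℕ)
    (ι : V → V → Fin (B + 2)) :
    GadgetVert V B d → GadgetVert V B d → Prop
  | Sum.inl (v, Sum.inl _), Sum.inl (w, Sum.inr _) => v = w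
  | Sum.inl (v, Sum.inr j), Sum.inr (Sum.inl u) => (G.Adj v u ∨ u = v) ∧ ι v u = j
  | Sum.inr (Sum.inl v), Sum.inr (Sum.inr ⟨w, _⟩) => v = w
  | _, _ => False

/-- The gadget graph `G′` constructed from `G`. -/
def gadgetGraph {V : Type*} (G : SimpleGraph V) (B : ℕ) (d : V → ℕ)
    (ι : V → V → Fin (B + 2)) : SimpleGraph (GadgetVert V B d) :=
  SimpleGraph.fromRel (gadgetRel G B d ι)

/-- The capacity function on the gadget graph: each vertex `v_d` has capacity `B + 1`;
every other vertex has capacity equal to its degree in the gadget graph. -/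
noncomputable def gadgetCap {V : Type*} (G : SimpleGraph V) (B : ℕ) (d : V → ℕ)
    (ι : V → V → Fin (B + 2)) : GadgetVert V B d → ℕ
  | Sum.inr (Sum.inl _) => B + 1
  | w => ((gadgetGraph G B d ι).neighborSet w).ncard

/-- A capacitated vertex cover of a graph `H` with capacities `c`: a vertex set `C`
together with an assignment of every edge of `H` to one of its endpoints lying in `C`,
such that every vertex `w ∈ C` is assigned at most `c w` edges. -/
def IsCapacitatedVertexCover {W : Type*} (H : SimpleGraph W) (c : W → ℕ) (C : Set W) : Prop :=
  ∃ f : Sym2 W → W, (∀ e ∈ H.edgeSet, f e ∈ e ∧ f e ∈ C) ∧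
    ∀ w ∈ C, {e | e ∈ H.edgeSet ∧ f e = w}.ncard ≤ c w

/-!
Every vertex `v` of `G` owns at least `B + 2` cover vertices: one full side of its choice
gadget `K_{B+1,B+2}`, and an endpoint of the first leaf edge at `v_d`. It owns at least
`B + 3` as soon as the cover contains a vertex of the larger side of its choice gadget, or
both `v_d` and a leaf of `v`. Such heavy vertices dominate `G`: if `v_d` is not in the cover,
the edge from `v`'s own choice gadget to `v_d` puts a larger-side vertex of `v` into it;
otherwise `v_d` has `d(v) + 1 + (B - d(v) + 1) ≥ B + 2` incident edges, more than its
capacity `B + 1`, so one of them is charged to its other endpoint, a larger-side vertex of some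
`u ∈ N[v]` or a leaf of `v`. Counting cover vertices by owner leaves at most `k` heavy vertices.
-/

open Finset

section CapacitatedVertexCover

variable {W : Type*} {H : SimpleGraph W} {c : W → ℕ} {C : Set W}

theorem IsCapacitatedVertexCover.isVertexCover (hC : IsCapacitatedVertexCover H c C) :
    H.IsVertexCover C := by
  obtain ⟨f, hf, -⟩ := hC
  intro a b hab
  obtain ⟨hfe, hfC⟩ := hf s(a, b) hab
  rcases Sym2.mem_iff.1 hfe with h | h <;> rw [h] at hfC <;> simp [hfC]

theorem IsCapacitatedVertexCover.exists_mem_of_capacity_lt [Finite W]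
    (hC : IsCapacitatedVertexCover H c C) {w : W} {N : Finset W}
    (hN : ∀ x ∈ N, H.Adj w x) (hcap : c w < #N) : ∃ x ∈ N, x ∈ C := by
  classical
  obtain ⟨f, hf, hfcap⟩ := hC
  by_contra! hNC
  have hcharged : ∀ x ∈ N, f s(w, x) = w := fun x hx => by
    obtain ⟨hfe, hfC⟩ := hf s(w, x) (hN x hx)
    exact (Sym2.mem_iff.1 hfe).resolve_right fun h => hNC x hx (h ▸ hfC)
  obtain ⟨x₀, hx₀⟩ := card_pos.1 (Nat.zero_lt_of_lt hcap)
  have hwC : w ∈ C := hcharged x₀ hx₀ ▸ (hf _ (hN x₀ hx₀)).2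
  have hsub : (↑(N.image fun x => s(w, x)) : Set (Sym2 W)) ⊆
      {e | e ∈ H.edgeSet ∧ f e = w} := by
    intro e he
    obtain ⟨x, hx, rfl⟩ := mem_image.1 (mem_coe.1 he)
    exact ⟨hN x hx, hcharged x hx⟩
  have hle := Set.ncard_le_ncard hsub (Set.toFinite _)
  rw [Set.ncard_coe_finset, card_image_of_injective _ fun _ _ => Sym2.congr_right.1] at hle
  exact absurd (hle.trans (hfcap w hwC)) hcap.not_ge

end CapacitatedVertexCover

theorem SimpleGraph.IsVertexCover.forall_or_forall {W α β : Type*} {H : SimpleGraph W}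
    {C : Set W} (hC : H.IsVertexCover C) (l : α → W) (r : β → W)
    (hlr : ∀ i j, H.Adj (l i) (r j)) : (∀ i, l i ∈ C) ∨ (∀ j, r j ∈ C) := by
  by_contra! h
  obtain ⟨⟨i, hi⟩, j, hj⟩ := h
  exact (hC (hlr i j)).elim hi hj

section SumCard

variable {α β : Type*} [Fintype α] [Fintype β] {P : Finset (α ⊕ β)}

theorem Finset.card_le_card_of_forall_inl_or_forall_inr
    (hP : (∀ a, .inl a ∈ P) ∨ (∀ b, .inr b ∈ P))
    (hαβ : Fintype.card α ≤ Fintype.card β) :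
    Fintype.card α ≤ #P := by
  rw [← card_toLeft_add_card_toRight]
  rcases hP with h | h
  · rw [eq_univ_of_forall fun a => mem_toLeft.2 (h a), card_univ]
    omega
  · rw [eq_univ_of_forall (s := P.toRight) fun b => mem_toRight.2 (h b), card_univ]
    omega

theorem Finset.card_lt_card_of_forall_inl_or_forall_inr
    (hP : (∀ a, .inl a ∈ P) ∨ (∀ b, .inr b ∈ P))
    (hαβ : Fintype.card α < Fintype.card β)
    {b : β} (hb : .inr b ∈ P) : Fintype.card α < #P := by
  rw [← card_toLeft_add_card_toRight]
  rcases hP with h | h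
  · rw [eq_univ_of_forall fun a => mem_toLeft.2 (h a), card_univ]
    have := card_pos.2 ⟨b, mem_toRight.2 hb⟩
    omega
  · rw [eq_univ_of_forall (s := P.toRight) fun b => mem_toRight.2 (h b), card_univ]
    omega

end SumCard

theorem Fintype.card_mul_add_card_lt_le_sum {ι : Type*} [Fintype ι] (a : ι → ℕ) (m : ℕ)
    (ha : ∀ i, m ≤ a i) : Fintype.card ι * m + #{i | m < a i} ≤ ∑ i, a i := by
  classical
  calc Fintype.card ι * m + #{i | m < a i} = ∑ i, (m + if m < a i then 1 else 0) := by
        rw [sum_add_distrib, sum_const, card_filter, smul_eq_mul, card_univ]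
    _ ≤ ∑ i, a i := sum_le_sum fun i _ => by split_ifs <;> grind

def GadgetVert.owner {V : Type*} {B : ℕ} {d : V → ℕ} : GadgetVert V B d → V
  | Sum.inl (v, _) => v
  | Sum.inr (Sum.inl v) => v
  | Sum.inr (Sum.inr ⟨v, _⟩) => v

def GadgetVert.choiceCover {V : Type*} [DecidableEq V] {B : ℕ} {d : V → ℕ}
    (C : Finset (GadgetVert V B d)) (v : V) : Finset (Fin (B + 1) ⊕ Fin (B + 2)) :=
  {s | Sum.inl (v, s) ∈ C}

theorem GadgetVert.card_choiceCover_add_card_le {V : Type*} [DecidableEq V] {B : ℕ}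
    {d : V → ℕ} (C : Finset (GadgetVert V B d)) (v : V)
    (D : Finset (V ⊕ Σ w : V, Fin (B - d w + 1)))
    (hD : ∀ y ∈ D, Sum.inr y ∈ C ∧ GadgetVert.owner (Sum.inr y : GadgetVert V B d) = v) :
    #(choiceCover C v) + #D ≤ #{x ∈ C | GadgetVert.owner x = v} := by
  rw [← card_disjSum]
  refine card_le_card_of_injOn (Sum.map (Prod.mk v) id) ?_
    (Sum.map_injective.2 ⟨Prod.mk_right_injective v, Function.injective_id⟩).injOn
  rintro (s | y) hy
  · exact mem_filter.2 ⟨by simpa [choiceCover] using hy, rfl⟩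
  · exact mem_filter.2 (hD y (by simpa using hy))

namespace gadgetGraph

variable {V : Type*} {G : SimpleGraph V} {B : ℕ} {d : V → ℕ} {ι : V → V → Fin (B + 2)}

theorem adj_small_large (v : V) (i : Fin (B + 1)) (j : Fin (B + 2)) :
    (gadgetGraph G B d ι).Adj (Sum.inl (v, Sum.inl i)) (Sum.inl (v, Sum.inr j)) := by
  rw [gadgetGraph, SimpleGraph.fromRel_adj]
  exact ⟨by simp, Or.inl rfl⟩

theorem adj_large_dom {v u : V} (h : G.Adj v u ∨ u = v) :
    (gadgetGraph G B d ι).Adj (Sum.inl (v, Sum.inr (ι v u))) (Sum.inr (Sum.inl u)) := by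
  rw [gadgetGraph, SimpleGraph.fromRel_adj]
  exact ⟨by simp, Or.inl ⟨h, rfl⟩⟩

theorem adj_dom_leaf (v : V) (l : Fin (B - d v + 1)) :
    (gadgetGraph G B d ι).Adj (Sum.inr (Sum.inl v)) (Sum.inr (Sum.inr ⟨v, l⟩)) := by
  rw [gadgetGraph, SimpleGraph.fromRel_adj]
  exact ⟨by simp, Or.inl rfl⟩

theorem exists_domination_gadget_mem {c : GadgetVert V B d → ℕ} {C : Set (GadgetVert V B d)}
    (hC : IsCapacitatedVertexCover (gadgetGraph G B d ι) c C) (v : V) :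
    ∃ y : V ⊕ Σ w : V, Fin (B - d w + 1),
      Sum.inr y ∈ C ∧ GadgetVert.owner (Sum.inr y : GadgetVert V B d) = v := by
  rcases hC.isVertexCover (adj_dom_leaf (G := G) (ι := ι) v 0) with h | h
  exacts [⟨_, h, rfl⟩, ⟨_, h, rfl⟩]

variable [DecidableEq V] {c : GadgetVert V B d → ℕ} {C : Finset (GadgetVert V B d)}

theorem forall_small_or_forall_large_mem (hC : IsCapacitatedVertexCover (gadgetGraph G B d ι) c C)
    (v : V) :
    (∀ i, .inl i ∈ GadgetVert.choiceCover C v) ∨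
      (∀ j, .inr j ∈ GadgetVert.choiceCover C v) := by
  simpa [GadgetVert.choiceCover] using
    hC.isVertexCover.forall_or_forall _ _ (adj_small_large (G := G) (ι := ι) v)

theorem add_two_le_card_owner (hC : IsCapacitatedVertexCover (gadgetGraph G B d ι) c C)
    (v : V) : B + 2 ≤ #{x ∈ C | GadgetVert.owner x = v} := by
  obtain ⟨y, hy⟩ := exists_domination_gadget_mem hC v
  have hchoice := card_le_card_of_forall_inl_or_forall_inr
    (forall_small_or_forall_large_mem hC v) (by simp)
  have := GadgetVert.card_choiceCover_add_card_le C v {y} (by simpa using hy)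
  simp only [Fintype.card_fin, card_singleton] at hchoice this
  omega

theorem add_three_le_card_owner_of_large_mem
    (hC : IsCapacitatedVertexCover (gadgetGraph G B d ι) c C) {v : V} {j : Fin (B + 2)}
    (hj : Sum.inl (v, Sum.inr j) ∈ C) : B + 3 ≤ #{x ∈ C | GadgetVert.owner x = v} := by
  obtain ⟨y, hy⟩ := exists_domination_gadget_mem hC v
  have hchoice := card_lt_card_of_forall_inl_or_forall_inr
    (forall_small_or_forall_large_mem hC v) (by simp) (b := j)
    (by simpa [GadgetVert.choiceCover] using hj)
  have := GadgetVert.card_choiceCover_add_card_le C v {y} (by simpa using hy)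
  simp only [Fintype.card_fin, card_singleton] at hchoice this
  omega

theorem add_three_le_card_owner_of_leaf_mem
    (hC : IsCapacitatedVertexCover (gadgetGraph G B d ι) c C) {v : V} {l : Fin (B - d v + 1)}
    (hv : Sum.inr (Sum.inl v) ∈ C) (hl : Sum.inr (Sum.inr ⟨v, l⟩) ∈ C) :
    B + 3 ≤ #{x ∈ C | GadgetVert.owner x = v} := by
  have hchoice := card_le_card_of_forall_inl_or_forall_inr
    (forall_small_or_forall_large_mem hC v) (by simp)
  have := GadgetVert.card_choiceCover_add_card_le C v {Sum.inl v, Sum.inr ⟨v, l⟩}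
    (by rintro _ hy; rcases mem_insert.1 hy with rfl | hy
        exacts [⟨hv, rfl⟩, mem_singleton.1 hy ▸ ⟨hl, rfl⟩])
  rw [Fintype.card_fin] at hchoice
  rw [card_pair Sum.inl_ne_inr] at this
  omega

theorem exists_closed_neighbor_add_three_le_card_owner [Fintype V] [DecidableRel G.Adj]
    (hC : IsCapacitatedVertexCover (gadgetGraph G B d ι) (gadgetCap G B d ι) C) (v : V)
    (hd : d v ≤ G.degree v) :
    ∃ u, (u = v ∨ G.Adj u v) ∧ B + 3 ≤ #{x ∈ C | GadgetVert.owner x = u} := by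
  by_cases hv : Sum.inr (Sum.inl v) ∈ C
  · let φ : V ⊕ Fin (B - d v + 1) → GadgetVert V B d :=
      Sum.elim (fun u => Sum.inl (u, Sum.inr (ι u v))) (fun l => Sum.inr (Sum.inr ⟨v, l⟩))
    have hφ : φ.Injective := Function.Injective.sumElim
      (fun _ _ h => by simp_all) (fun _ _ h => by simpa using h) (by simp)
    let N := ((insert v (G.neighborFinset v)).disjSum univ).map ⟨φ, hφ⟩
    have hN : ∀ x ∈ N, (gadgetGraph G B d ι).Adj (Sum.inr (Sum.inl v)) x := by
      simp only [N, mem_map, Function.Embedding.coeFn_mk]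
      rintro _ ⟨u | l, hu, rfl⟩
      · have : G.Adj u v ∨ v = u := by
          simpa [eq_comm, SimpleGraph.adj_comm, or_comm] using hu
        exact (adj_large_dom this).symm
      · exact adj_dom_leaf v l
    have hcap : gadgetCap G B d ι (Sum.inr (Sum.inl v)) < #N := by
      simp only [N, gadgetCap, card_map, card_disjSum, card_univ, Fintype.card_fin,
        card_insert_of_notMem (G.notMem_neighborFinset_self v),
        SimpleGraph.card_neighborFinset_eq_degree]
      omega
    obtain ⟨x, hxN, hxC⟩ := hC.exists_mem_of_capacity_lt hN hcap
    obtain ⟨u | l, hu, rfl⟩ := mem_map.1 hxN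
    · have : u = v ∨ G.Adj u v := by
        simpa [SimpleGraph.adj_comm] using hu
      exact ⟨u, this, add_three_le_card_owner_of_large_mem hC hxC⟩
    · exact ⟨v, Or.inl rfl, add_three_le_card_owner_of_leaf_mem hC hv hxC⟩
  · rcases hC.isVertexCover (adj_large_dom (G := G) (ι := ι) (Or.inr rfl : G.Adj v v ∨ v = v))
      with h | h
    · exact ⟨v, Or.inl rfl, add_three_le_card_owner_of_large_mem hC h⟩
    · exact absurd h hv

end gadgetGraph

theorem stmt_15_general {V : Type*} [Fintype V] (G : SimpleGraph V)
    [DecidableRel G.Adj] (B k : ℕ)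
    (ι : V → V → Fin (B + 2))
    (C : Set (GadgetVert V B (fun v => G.degree v)))
    (hC : IsCapacitatedVertexCover (gadgetGraph G B (fun v => G.degree v) ι)
      (gadgetCap G B (fun v => G.degree v) ι) C)
    (hCcard : C.ncard ≤ Fintype.card V * (B + 2) + k) :
    ∃ S : Finset V, (∀ v : V, ∃ u ∈ S, u = v ∨ G.Adj u v) ∧ S.card ≤ k := by
  classical
  obtain ⟨C, rfl⟩ := C.toFinite.exists_finset_coe
  let weight v := #{x ∈ C | GadgetVert.owner x = v}
  refine ⟨({u | B + 2 < weight u} : Finset V), fun v => ?_, ?_⟩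
  · obtain ⟨u, huv, hu⟩ :=
      gadgetGraph.exists_closed_neighbor_add_three_le_card_owner hC v le_rfl
    exact ⟨u, mem_filter.2 ⟨mem_univ u, hu⟩, huv⟩
  · have hsum : #C = ∑ v, weight v := card_eq_sum_card_fiberwise fun x _ => mem_univ _
    have := Fintype.card_mul_add_card_lt_le_sum weight (B + 2)
      (gadgetGraph.add_two_le_card_owner hC)
    rw [Set.ncard_coe_finset] at hCcard
    omega

/-- If the gadget graph G′ (built from a finite graph G on n vertices with
maximum degree ≤ B) with the capacities above has a capacitated vertex cover of size at
most n(B+2) + k, then G has a dominating set of size at most k. -/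
theorem stmt_15 {V : Type*} [Fintype V] [DecidableEq V] (G : SimpleGraph V)
    [DecidableRel G.Adj] (B k : ℕ) (hB : 0 < B) (hk : 0 < k)
    (hdeg : ∀ v : V, G.degree v ≤ B)
    (ι : V → V → Fin (B + 2))
    (hι : ∀ v : V, Set.InjOn (ι v) {u : V | G.Adj v u ∨ u = v})
    (C : Set (GadgetVert V B (fun v => G.degree v)))
    (hC : IsCapacitatedVertexCover (gadgetGraph G B (fun v => G.degree v) ι)
      (gadgetCap G B (fun v => G.degree v) ι) C)
    (hCcard : C.ncard ≤ Fintype.card V * (B + 2) + k) :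
    ∃ S : Finset V, (∀ v : V, ∃ u ∈ S, u = v ∨ G.Adj u v) ∧ S.card ≤ k :=
  stmt_15_general G B k ι C hC hCcard
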